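/- Let q = p^t be a power of a prime p, m ≥ 1, and let B = (β_1,…,β_m) be a basis of F_{q^m} over F_q with Gram matrix M = (tr_{q^m/q}(β_i β_j))_{1≤i,j≤m}. Define φ_B : F_{q^m}^{2n} → F_q^{2nm} by φ_B((u|v)) = ((c_B(u_1),…,c_B(u_n)) | (M c_B(v_1),…,M c_B(v_n))). Then φ_B preserves the trace-symplectic form: for all x = (u|v) and y = (u^*|v^*) in F_{q^m}^{2n}, tr_{q^m/p}(v·u^* − v^*·u) = tr_{q/p}(b·a^* − b^*·a), where φ_B(x) = (a|b) and φ_B(y) = (a^*|b^*). Consequently, for every F_p-additive (i.e. F_p-linear) code C ⊆ F_{q^m}^{2n} with C ⊆ C^{⊥_s}, one has φ_B(C) ⊆ [φ_B(C)]^{⊥_s}. -/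

import Mathlib

/-!
The trace to `F_p` factors as `tr_{q/p} ∘ tr_{q^m/q}`, and `tr_{q^m/q}(ab) = (M c_B(a)) · c_B(b)`
because `M` is the matrix of the trace form in the basis `B`. Hence `tr_{q^m/q}` of each dot product
`v · u'` is the coordinate pairing of the `Z`-part of `φ_B(u, v)` with the `X`-part of `φ_B(u', v')`,
so `φ_B` preserves the trace-symplectic form and therefore self-orthogonality.
-/

open Finset

/-- Trace-symplectic dual of an additive (`R`-linear) code `C ⊆ F^n × F^n`. -/
def sympDual (R : Type*) {F : Type*} [CommRing R] [CommRing F] [Algebra R F]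
    {ι : Type*} [Fintype ι]
    (C : Submodule R ((ι → F) × (ι → F))) : Submodule R ((ι → F) × (ι → F)) where
  carrier := {y | ∀ x ∈ C, Algebra.trace R F (∑ i, (x.2 i * y.1 i - y.2 i * x.1 i)) = 0}
  zero_mem' := by intro x hx; simp
  add_mem' := by
    intro a b ha hb x hx
    simp only [Set.mem_setOf_eq] at *
    have h : (∑ i, (x.2 i * (a + b).1 i - (a + b).2 i * x.1 i))
        = (∑ i, (x.2 i * a.1 i - a.2 i * x.1 i)) + ∑ i, (x.2 i * b.1 i - b.2 i * x.1 i) := by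
      rw [← Finset.sum_add_distrib]
      refine Finset.sum_congr rfl fun i _ => ?_
      simp only [Prod.fst_add, Prod.snd_add, Pi.add_apply]
      ring
    rw [h, map_add, ha x hx, hb x hx, add_zero]
  smul_mem' := by
    intro c a ha x hx
    simp only [Set.mem_setOf_eq] at *
    have h : (∑ i, (x.2 i * (c • a).1 i - (c • a).2 i * x.1 i))
        = c • ∑ i, (x.2 i * a.1 i - a.2 i * x.1 i) := by
      rw [Finset.smul_sum]
      refine Finset.sum_congr rfl fun i _ => ?_
      simp only [Prod.smul_fst, Prod.smul_snd, Pi.smul_apply]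
      simp only [Algebra.smul_def, mul_sub]
      ring
    rw [h, map_smul, ha x hx, smul_zero]

/-- The expansion map `φ_B` of the paper: coordinates with respect to `B` on the
`X`-part, Gram-matrix-twisted coordinates on the `Z`-part;  it is `F_p`-linear. -/
noncomputable def phiB (p : ℕ) {K L : Type*} [Field K] [Field L] [Algebra K L]
    [Algebra (ZMod p) K] [Algebra (ZMod p) L] [IsScalarTower (ZMod p) K L]
    {m : ℕ} (B : Module.Basis (Fin m) K L) (M : Matrix (Fin m) (Fin m) K) (n : ℕ) :
    ((Fin n → L) × (Fin n → L)) →ₗ[ZMod p] ((Fin n × Fin m → K) × (Fin n × Fin m → K)) :=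
  AddMonoidHom.toZModLinearMap p
    { toFun := fun x => (fun ij => B.repr (x.1 ij.1) ij.2,
        fun ij => ∑ k, M ij.2 k * B.repr (x.2 ij.1) k)
      map_zero' := by
        refine Prod.ext ?_ ?_ <;> funext ij <;> simp
      map_add' := fun x y => by
        refine Prod.ext ?_ ?_ <;> funext ij <;>
          simp [Finset.sum_add_distrib, mul_add] }

open Matrix in
theorem Module.Basis.trace_mul_eq_mulVec_dotProduct {R S ι : Type*} [CommRing R] [CommRing S]
    [Algebra R S] [Fintype ι] (b : Module.Basis ι R S) (M : Matrix ι ι R)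
    (hM : ∀ i j, M i j = Algebra.trace R S (b i * b j)) (x y : S) :
    Algebra.trace R S (x * y) = M *ᵥ b.repr x ⬝ᵥ b.repr y := by
  classical
  have hgram : LinearMap.BilinForm.toMatrix b (Algebra.traceForm R S) = M := by
    ext i j
    rw [Algebra.traceForm_toMatrix, hM]
  rw [mul_comm, ← Algebra.traceForm_apply,
    LinearMap.BilinForm.apply_eq_dotProduct_toMatrix_mulVec b, hgram, dotProduct_comm]

section SympForm

variable (R : Type*) {F ι : Type*} [CommRing R] [CommRing F] [Algebra R F] [Fintype ι]

noncomputable def sympForm (x y : (ι → F) × (ι → F)) : R :=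
  Algebra.trace R F (∑ i, (x.2 i * y.1 i - y.2 i * x.1 i))

theorem sympForm_eq (x y : (ι → F) × (ι → F)) :
    sympForm R x y = Algebra.trace R F ((∑ i, x.2 i * y.1 i) - ∑ i, y.2 i * x.1 i) := by
  rw [sympForm, Finset.sum_sub_distrib]

variable {R}

theorem mem_sympDual {C : Submodule R ((ι → F) × (ι → F))} {y : (ι → F) × (ι → F)} :
    y ∈ sympDual R C ↔ ∀ x ∈ C, sympForm R x y = 0 :=
  Iff.rfl

theorem Submodule.map_le_sympDual_map {E κ : Type*} [CommRing E] [Algebra R E] [Fintype κ]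
    (f : ((ι → F) × (ι → F)) →ₗ[R] ((κ → E) × (κ → E)))
    (hf : ∀ x y, sympForm R (f x) (f y) = sympForm R x y)
    {C : Submodule R ((ι → F) × (ι → F))} (hC : C ≤ sympDual R C) :
    C.map f ≤ sympDual R (C.map f) := by
  rintro _ ⟨y, hy, rfl⟩
  rw [mem_sympDual]
  rintro _ ⟨x, hx, rfl⟩
  rw [hf]
  exact hC hy x hx

end SympForm

theorem phiB_sympForm (p : ℕ) [Fact p.Prime]
    {K L : Type*} [Field K] [Field L] [Algebra K L]
    [Algebra (ZMod p) K] [Algebra (ZMod p) L] [IsScalarTower (ZMod p) K L]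
    [FiniteDimensional (ZMod p) K] [FiniteDimensional K L]
    {m : ℕ} (B : Module.Basis (Fin m) K L) (M : Matrix (Fin m) (Fin m) K)
    (hM : ∀ i j, M i j = Algebra.trace K L (B i * B j)) {n : ℕ}
    (x y : (Fin n → L) × (Fin n → L)) :
    sympForm (ZMod p) (phiB p B M n x) (phiB p B M n y) = sympForm (ZMod p) x y := by
  have hpair : ∀ a b : Fin n → L, Algebra.trace K L (∑ i, a i * b i) =
      ∑ ij : Fin n × Fin m, (∑ k, M ij.2 k * B.repr (a ij.1) k) * B.repr (b ij.1) ij.2 := by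
    intro a b
    rw [map_sum, Fintype.sum_prod_type]
    exact Finset.sum_congr rfl fun i _ => B.trace_mul_eq_mulVec_dotProduct M hM (a i) (b i)
  rw [sympForm_eq, sympForm_eq, ← Algebra.trace_trace (S := K) (∑ i, x.2 i * y.1 i - _)]
  congr 1
  rw [map_sub, hpair, hpair]
  rfl

/-- `φ_B` preserves the trace-symplectic form, and consequently maps
self-orthogonal additive codes to self-orthogonal additive codes. -/
theorem phiB_preserves_symplectic (p : ℕ) [Fact p.Prime]
    {K L : Type*} [Field K] [Field L] [Algebra K L]
    [Algebra (ZMod p) K] [Algebra (ZMod p) L] [IsScalarTower (ZMod p) K L]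
    [FiniteDimensional (ZMod p) K] [FiniteDimensional K L]
    {m : ℕ} (B : Module.Basis (Fin m) K L) (M : Matrix (Fin m) (Fin m) K)
    (hM : ∀ i j, M i j = Algebra.trace K L (B i * B j)) (n : ℕ) :
    (∀ u v u' v' : Fin n → L,
      Algebra.trace (ZMod p) L ((∑ i, v i * u' i) - ∑ i, v' i * u i)
        = Algebra.trace (ZMod p) K
            ((∑ ij : Fin n × Fin m,
                (phiB p B M n (u, v)).2 ij * (phiB p B M n (u', v')).1 ij)
              - ∑ ij : Fin n × Fin m,
                (phiB p B M n (u', v')).2 ij * (phiB p B M n (u, v)).1 ij)) ∧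
    (∀ C : Submodule (ZMod p) ((Fin n → L) × (Fin n → L)),
      C ≤ sympDual (ZMod p) C →
      Submodule.map (phiB p B M n) C ≤ sympDual (ZMod p) (Submodule.map (phiB p B M n) C)) := by
  refine ⟨fun u v u' v' => ?_, fun C hC => ?_⟩
  · have h := phiB_sympForm p B M hM (u, v) (u', v')
    rwa [sympForm_eq, sympForm_eq, eq_comm] at h
  · exact Submodule.map_le_sympDual_map _ (phiB_sympForm p B M hM) hC
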